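/- For every d ≥ 2 there exists a finite group G of order a power of 2 with an inverse-closed identity-free generating set S of size d such that Cay(G,S) is bipartite and admits an induced subgraph of maximum degree at most 1 on strictly more than half its vertices. -/

import Mathlib

/-- The Cayley graph of a group `G` with connection set `S`. -/
def cayley (G : Type*) [Group G] (S : Set G) : SimpleGraph G :=
  SimpleGraph.fromRel (fun g h => g⁻¹ * h ∈ S)

/-- The wreath product `Z₂ ≀ G`: pairs `(a, g)` with `a : G → ZMod 2` and `g ∈ G`,
with multiplication `(a, g)(b, h) = (a + b^g, g h)` where `b^g(x) = b(g⁻¹ x)`. -/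
structure Wr (G : Type*) where
  a : G → ZMod 2
  g : G

namespace Wr
variable {G : Type*} [Group G]

instance : Mul (Wr G) := ⟨fun x y => ⟨x.a + fun t => y.a (x.g⁻¹ * t), x.g * y.g⟩⟩
instance : One (Wr G) := ⟨⟨0, 1⟩⟩
instance : Inv (Wr G) := ⟨fun x => ⟨fun t => x.a (x.g * t), x.g⁻¹⟩⟩

theorem mul_def (x y : Wr G) :
    x * y = ⟨x.a + fun t => y.a (x.g⁻¹ * t), x.g * y.g⟩ := rfl
theorem one_def : (1 : Wr G) = ⟨0, 1⟩ := rfl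
theorem inv_def (x : Wr G) : x⁻¹ = ⟨fun t => x.a (x.g * t), x.g⁻¹⟩ := rfl

instance : Group (Wr G) where
  mul_assoc x y z := by
    simp only [mul_def]
    congr 1
    · funext t
      simp [add_assoc, mul_inv_rev, mul_assoc]
    · exact mul_assoc _ _ _
  one_mul x := by
    cases x with
    | mk a g =>
      simp only [mul_def, one_def]
      congr 1
      · funext t; simp
      · exact one_mul g
  mul_one x := by
    cases x with
    | mk a g =>
      simp only [mul_def, one_def]
      congr 1
      · funext t; simp
      · exact mul_one g
  inv_mul_cancel x := by
    cases x with
    | mk a g =>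
      simp only [mul_def, inv_def, one_def]
      congr 1
      · funext t
        have h2 : ∀ z : ZMod 2, z + z = 0 := by decide
        simp [h2]
      · exact inv_mul_cancel g

end Wr

/-- The generator `(a₁, 1)` of the wreath product, where `a₁` is the indicator
function of `{1}`. -/
def wgen (G : Type*) [Group G] [DecidableEq G] : Wr G :=
  ⟨fun t => if t = 1 then 1 else 0, 1⟩

/-- The canonical generating set `Ŝ = {(a₁, 1)} ∪ {(0, s) : s ∈ S}` of `Z₂ ≀ G`. -/
def wS {G : Type*} [Group G] [DecidableEq G] (S : Set G) : Set (Wr G) :=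
  insert (wgen G) ((fun s => Wr.mk 0 s) '' S)

/-- `S` is an inverse-closed, identity-free generating set of `G` of size `d`, the Cayley
graph `Cay(G, S)` is bipartite, and it admits an induced subgraph of maximum degree at
most 1 on strictly more than half of its vertices. -/
def GoodBipartiteCayley (G : Type*) [Group G] (S : Set G) (d : ℕ) : Prop :=
  (∀ s ∈ S, s⁻¹ ∈ S) ∧ (1 : G) ∉ S ∧ Subgroup.closure S = ⊤ ∧ S.ncard = d ∧
    (cayley G S).Colorable 2 ∧
    ∃ H : Set G, 2 * H.ncard > Nat.card G ∧
      ∀ g ∈ H, ({h ∈ H | (cayley G S).Adj g h}).ncard ≤ 1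


/-! Properly 2-colour `Cay(G, S)` by `c` with `c 1 = 0` and choose a set `B ∌ 1` cut into
blocks. Replacing the colour class `{c = 1}` by its symmetric difference with `W = {1} ∪ B`
leaves an induced subgraph of maximum degree at most 1 as soon as the neighbours of `1` lie in
distinct blocks, every vertex of `B` has at most one edge leaving its block, and every vertex
outside `W` has at most one edge into `B`. If `B` meets both colour classes equally often, the
new set has `|G| / 2 + 1` elements.

These conditions pass from `G` to `Z₂ ≀ G` with generators `Ŝ`: the new `B` is the copy of
`Cay(G, S)` whose only lit lamp is at `1`, together with all `(a, g)` with `g ∈ B` and `a`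
supported in the block of `g`. Both pieces are balanced, being closed under right multiplication
by a generator (`(0, s)`, resp. the lamp toggle), which flips colours. Starting from the trivial
group with `S = ∅`, `d` steps give the examples; balance holds from the second step on. -/

namespace Wr

attribute [ext] Wr

section Card

variable {G : Type*}

def equivProd : Wr G ≃ (G → ZMod 2) × G where
  toFun v := (v.a, v.g)
  invFun p := ⟨p.1, p.2⟩

variable [Fintype G] [DecidableEq G]

instance : Fintype (Wr G) := Fintype.ofEquiv _ equivProd.symm

instance : DecidableEq (Wr G) := equivProd.decidableEq

theorem card : Fintype.card (Wr G) = 2 ^ Fintype.card G * Fintype.card G := by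
  simp [Fintype.card_congr equivProd]

theorem card_eq_two_pow {k : ℕ} (hk : Fintype.card G = 2 ^ k) :
    Fintype.card (Wr G) = 2 ^ (Fintype.card G + k) := by
  rw [card, hk, pow_add]

end Card

variable {G : Type*} [Group G]

theorem mul_mk_zero (v : Wr G) (s : G) : v * ⟨0, s⟩ = ⟨v.a, v.g * s⟩ := by
  ext t <;> simp [mul_def]

def ofBase : G →* Wr G where
  toFun g := ⟨0, g⟩
  map_one' := rfl
  map_mul' g h := by rw [mul_mk_zero]

def ofLamps : Multiplicative (G → ZMod 2) →* Wr G where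
  toFun a := ⟨a.toAdd, 1⟩
  map_one' := rfl
  map_mul' _ _ := by ext t <;> simp [mul_def]

theorem eq_ofLamps_mul_ofBase (v : Wr G) :
    v = ofLamps (Multiplicative.ofAdd v.a) * ofBase v.g := by
  ext t <;> simp [ofLamps, ofBase, mul_mk_zero]

section wgen

variable [DecidableEq G]

theorem wgen_a : (wgen G).a = Pi.single 1 1 := by
  ext t; simp [wgen, Pi.single_apply]

theorem mul_wgen (v : Wr G) : v * wgen G = ⟨v.a + Pi.single v.g 1, v.g⟩ := by
  ext t
  · simp [mul_def, wgen_a, Pi.single_apply, inv_mul_eq_one, eq_comm]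
  · simp [mul_def, wgen]

theorem wgen_inv : (wgen G)⁻¹ = wgen G := by
  ext t <;> simp [inv_def, wgen]

theorem wgen_mul_self : wgen G * wgen G = 1 := by
  nth_rw 1 [← wgen_inv]; exact inv_mul_cancel _

theorem wgen_ne_mk_zero (s : G) : wgen G ≠ ⟨0, s⟩ := fun h => by
  simpa [wgen_a] using congrFun (congrArg Wr.a h) 1

end wgen

end Wr

structure IsSymmGenSet {G : Type*} [Group G] (S : Set G) : Prop where
  inv_mem : ∀ s ∈ S, s⁻¹ ∈ S
  one_notMem : (1 : G) ∉ S
  closure_eq_top : Subgroup.closure S = ⊤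

section WreathGenSet

variable {G : Type*} [Group G] [DecidableEq G] {S : Set G}

theorem mem_wS {z : Wr G} : z ∈ wS S ↔ z = wgen G ∨ ∃ s ∈ S, z = ⟨0, s⟩ := by
  simp [wS, eq_comm]

theorem ncard_wS [Finite G] : (wS S).ncard = S.ncard + 1 := by
  rw [wS, Set.ncard_insert_of_notMem, Set.ncard_image_of_injective]
  · exact fun s t h => congrArg Wr.g h
  · rintro ⟨s, -, h⟩
    exact Wr.wgen_ne_mk_zero s h.symm

theorem closure_wS_eq_top [Finite G] (hS : Subgroup.closure S = ⊤) :
    Subgroup.closure (wS S) = ⊤ := by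
  set K := Subgroup.closure (wS S)
  have hbase : ∀ g, Wr.ofBase g ∈ K := by
    have hle : Subgroup.closure S ≤ K.comap Wr.ofBase := (Subgroup.closure_le _).mpr
      fun s hs => Subgroup.subset_closure (Set.mem_insert_of_mem _ ⟨s, hs, rfl⟩)
    exact fun g => hle (hS ▸ Subgroup.mem_top g)
  -- `δ_t = (0, t) ⋅ (δ_1, 1) ⋅ (0, t⁻¹)`
  have hsingle : ∀ t, Wr.ofLamps (Multiplicative.ofAdd (Pi.single t 1)) ∈ K := by
    intro t
    have hw : wgen G ∈ K := Subgroup.subset_closure (Set.mem_insert _ _)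
    convert mul_mem (mul_mem (hbase t) hw) (hbase t⁻¹) using 1
    ext u <;> simp [Wr.ofLamps, Wr.ofBase, Wr.mul_wgen, Wr.mul_mk_zero]
  have hlamps : ∀ a, Multiplicative.ofAdd a ∈ K.comap Wr.ofLamps := by
    have := Fintype.ofFinite G
    intro a
    rw [← Finset.univ_sum_single a, ofAdd_sum]
    refine prod_mem fun t _ => ?_
    rcases (by decide : ∀ z : ZMod 2, z = 0 ∨ z = 1) (a t) with h | h <;> rw [h]
    · simp
    · exact hsingle t
  exact eq_top_iff.mpr fun v _ => v.eq_ofLamps_mul_ofBase ▸ mul_mem (hlamps _) (hbase _)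

theorem IsSymmGenSet.wS [Finite G] (hS : IsSymmGenSet S) : IsSymmGenSet (wS S) where
  inv_mem z hz := by
    rcases mem_wS.mp hz with rfl | ⟨s, hs, rfl⟩
    · rw [Wr.wgen_inv]; exact mem_wS.mpr (.inl rfl)
    · exact mem_wS.mpr (.inr ⟨s⁻¹, hS.inv_mem s hs, rfl⟩)
  one_notMem h := by
    rcases mem_wS.mp h with h | ⟨s, hs, h⟩
    · exact Wr.wgen_ne_mk_zero 1 h.symm
    · have : s = 1 := (congrArg Wr.g h).symm
      exact hS.one_notMem (this ▸ hs)
  closure_eq_top := closure_wS_eq_top hS.closure_eq_top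

end WreathGenSet

theorem ZMod.two_add_one_eq_zero_iff (c : ZMod 2) : c + 1 = 0 ↔ c ≠ 0 := by
  revert c; decide

section Cayley

variable {G : Type*} [Group G] {S : Set G}

theorem cayley_adj_iff (hinv : ∀ s ∈ S, s⁻¹ ∈ S) (h1 : (1 : G) ∉ S) {g h : G} :
    (cayley G S).Adj g h ↔ g⁻¹ * h ∈ S := by
  rw [cayley, SimpleGraph.fromRel_adj]
  refine ⟨fun ⟨_, hgh⟩ => hgh.elim id fun hhg => by simpa using hinv _ hhg,
    fun hgh => ⟨?_, .inl hgh⟩⟩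
  rintro rfl
  exact h1 (by simpa using hgh)

theorem cayley_colorable_two (c : G → ZMod 2) (hc : ∀ g, ∀ s ∈ S, c (g * s) = c g + 1) :
    (cayley G S).Colorable 2 := by
  have hne : ∀ g, ∀ s ∈ S, c (g * s) ≠ c g := fun g s hs => by
    rw [hc g s hs]; exact (by decide : ∀ z : ZMod 2, z + 1 ≠ z) _
  refine ⟨SimpleGraph.Coloring.mk c fun {g h} hgh => ?_⟩
  rcases (SimpleGraph.fromRel_adj _ g h).mp hgh with ⟨-, hgh | hhg⟩
  · have := hne g _ hgh
    rw [mul_inv_cancel_left] at this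
    exact this.symm
  · have := hne h _ hhg
    rw [mul_inv_cancel_left] at this
    exact this

theorem subsingleton_cayley_adj (hinv : ∀ s ∈ S, s⁻¹ ∈ S) (h1 : (1 : G) ∉ S) {A : Set G}
    {v : G} (hA : {s ∈ S | v * s ∈ A}.Subsingleton) :
    {w ∈ A | (cayley G S).Adj v w}.Subsingleton := by
  rintro w₁ ⟨hw₁, hadj₁⟩ w₂ ⟨hw₂, hadj₂⟩
  rw [cayley_adj_iff hinv h1] at hadj₁ hadj₂
  simpa using hA ⟨hadj₁, by simpa using hw₁⟩ ⟨hadj₂, by simpa using hw₂⟩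

theorem ncard_inter_color_eq [Finite G] {c : G → ZMod 2} (A : Set G) {s : G}
    (hA : ∀ v ∈ A, v * s ∈ A) (hc : ∀ v ∈ A, c (v * s) = c v + 1) :
    (A ∩ c ⁻¹' {0}).ncard = (A ∩ c ⁻¹' {1}).ncard := by
  have hinj : ∀ B : Set G, Set.InjOn (· * s) B := fun B => (mul_left_injective s).injOn
  refine le_antisymm (Set.ncard_le_ncard_of_injOn _ ?_ (hinj _))
    (Set.ncard_le_ncard_of_injOn _ ?_ (hinj _))
  all_goals
    rintro v ⟨hv, hcv⟩
    refine ⟨hA v hv, ?_⟩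
    simp only [Set.mem_preimage, Set.mem_singleton_iff] at hcv ⊢
    rw [hc v hv, hcv]
    decide

end Cayley

/-- `carrier` is cut into blocks, the fibres of `block`. -/
structure FlipSet (G : Type*) [Group G] (S : Set G) where
  color : G → ZMod 2
  color_one : color 1 = 0
  color_mul : ∀ g, ∀ s ∈ S, color (g * s) = color g + 1
  carrier : Set G
  block : G → G
  subset_carrier : S ⊆ carrier
  block_eq_self : ∀ s ∈ S, block s = s
  one_notMem : (1 : G) ∉ carrier
  exits_subsingleton : ∀ g ∈ carrier,
    {e ∈ S | g * e ∉ carrier ∨ block (g * e) ≠ block g}.Subsingleton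
  entries_subsingleton : ∀ g ∉ carrier, g ≠ 1 → {s ∈ S | g * s ∈ carrier}.Subsingleton

namespace FlipSet

variable {G : Type*} [Group G] {S : Set G}

theorem one_notMem_gen (P : FlipSet G S) : (1 : G) ∉ S :=
  fun h => P.one_notMem (P.subset_carrier h)

variable (P : FlipSet G S)

def switched : Set G := {v | v = 1 ∨ v ∈ P.carrier ↔ P.color v = 0}

def Balanced : Prop :=
  (P.carrier ∩ P.color ⁻¹' {0}).ncard = (P.carrier ∩ P.color ⁻¹' {1}).ncard

theorem switched_adj_subsingleton (hinv : ∀ s ∈ S, s⁻¹ ∈ S) {v : G}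
    (hv : v ∈ P.switched) :
    {w ∈ P.switched | (cayley G S).Adj v w}.Subsingleton := by
  refine subsingleton_cayley_adj hinv P.one_notMem_gen ?_
  have hcolor : ∀ s ∈ S, P.color (v * s) = 0 ↔ P.color v ≠ 0 := fun s hs => by
    rw [P.color_mul v s hs, ZMod.two_add_one_eq_zero_iff]
  by_cases hc : P.color v = 0
  · have hvW : v = 1 ∨ v ∈ P.carrier := hv.mpr hc
    have hexit : ∀ s ∈ S, v * s ∈ P.switched → v * s ∉ P.carrier := fun s hs hvs hmem =>
      (hcolor s hs).mp (hvs.mp (.inr hmem)) hc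
    rcases hvW with rfl | hvC
    · refine Set.subsingleton_of_forall_eq 1 fun s ⟨hs, hvs⟩ => ?_
      exact absurd (P.subset_carrier (by simpa using hs)) (by simpa using hexit s hs hvs)
    · exact (P.exits_subsingleton v hvC).anti
        fun s ⟨hs, hvs⟩ => ⟨hs, .inl (hexit s hs hvs)⟩
  · obtain ⟨hv1, hvC⟩ := not_or.mp fun h => hc (hv.mp h)
    refine (P.entries_subsingleton v hvC hv1).anti fun s ⟨hs, hvs⟩ => ⟨hs, ?_⟩
    rcases hvs.mpr ((hcolor s hs).mpr hc) with h | h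
    · rw [eq_inv_of_mul_eq_one_left h] at hvC
      exact absurd (P.subset_carrier (hinv s hs)) hvC
    · exact h

theorem switched_eq : P.switched =
    (P.color ⁻¹' {1} \ P.carrier) ∪ insert 1 (P.carrier ∩ P.color ⁻¹' {0}) := by
  ext v
  rcases (by decide : ∀ z : ZMod 2, z = 0 ∨ z = 1) (P.color v) with hc | hc <;>
    by_cases hv1 : v = 1 <;> simp_all [switched, P.color_one]

theorem two_mul_ncard_switched [Finite G] (hS : S.Nonempty) (hbal : P.Balanced) :
    2 * P.switched.ncard = Nat.card G + 2 := by
  obtain ⟨s, hs⟩ := hS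
  unfold Balanced at hbal
  set O := P.color ⁻¹' {1}
  have hcompl : Oᶜ = P.color ⁻¹' {0} := by
    ext v
    simp only [O, Set.mem_compl_iff, Set.mem_preimage, Set.mem_singleton_iff]
    generalize P.color v = z
    revert z; decide
  have hhalf : (P.color ⁻¹' {0}).ncard = O.ncard := by
    simpa using ncard_inter_color_eq Set.univ (fun v _ => Set.mem_univ (v * s))
      fun v _ => P.color_mul v s hs
  have htotal := Set.ncard_add_ncard_compl O
  have hO := Set.ncard_inter_add_ncard_sdiff_eq_ncard O P.carrier
  have hdisj : Disjoint (O \ P.carrier) (insert 1 (P.carrier ∩ P.color ⁻¹' {0})) := by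
    rw [Set.disjoint_left]
    rintro v ⟨hv, -⟩ (rfl | ⟨-, hv'⟩)
    · simp [O, P.color_one] at hv
    · simp_all [O]
  rw [switched_eq, Set.ncard_union_eq hdisj, Set.ncard_insert_of_notMem fun h => P.one_notMem h.1]
  rw [hcompl, hhalf] at htotal
  rw [Set.inter_comm] at hO
  omega

theorem goodBipartiteCayley [Finite G] (hS : IsSymmGenSet S) (hne : S.Nonempty)
    (hbal : P.Balanced) : GoodBipartiteCayley G S S.ncard := by
  refine ⟨hS.inv_mem, hS.one_notMem, hS.closure_eq_top, rfl, cayley_colorable_two _ P.color_mul,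
    P.switched, by linarith [P.two_mul_ncard_switched hne hbal], fun v hv => ?_⟩
  exact Set.ncard_le_one_iff_subsingleton.mpr (P.switched_adj_subsingleton hS.inv_mem hv)

section Carrier

variable {G : Type*} [Group G] {S : Set G} (P : FlipSet G S)

def blockOf (g : G) : Set G := {t | t ∈ P.carrier ∧ P.block t = P.block g}

def subCarrier : Set (Wr G) :=
  {v | v.g ∈ P.carrier ∧ Function.support v.a ⊆ P.blockOf v.g}

theorem blockOf_eq {g h : G} (hgh : P.block g = P.block h) : P.blockOf g = P.blockOf h := by
  simp [blockOf, hgh]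

theorem self_mem_blockOf {g : G} (hg : g ∈ P.carrier) : g ∈ P.blockOf g := ⟨hg, rfl⟩

theorem apply_one_eq_zero {v : Wr G} (hv : v ∈ P.subCarrier) : v.a 1 = 0 :=
  Function.notMem_support.mp fun h => P.one_notMem (hv.2 h).1

variable [DecidableEq G]

def copyCarrier (G : Type*) [Group G] [DecidableEq G] : Set (Wr G) := {v | v.a = Pi.single 1 1}

theorem a_ne_single_one {v : Wr G} (hv : v ∈ P.subCarrier) : v.a ≠ Pi.single 1 1 := fun h => by
  simpa [h] using P.apply_one_eq_zero hv

theorem mul_wgen_mem_sub {v : Wr G} (hv : v ∈ P.subCarrier) : v * wgen G ∈ P.subCarrier := by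
  rw [Wr.mul_wgen]
  refine ⟨hv.1, fun t ht => ?_⟩
  by_cases htg : t = v.g
  · rw [htg]; exact P.self_mem_blockOf hv.1
  · exact hv.2 (by simpa [Pi.single_apply, htg] using ht)

theorem single_add_eq_of_mul_wgen_mem {v : Wr G} (hv : v ∉ copyCarrier G ∪ P.subCarrier)
    (h : v * wgen G ∈ copyCarrier G ∪ P.subCarrier) :
    v.a + Pi.single v.g 1 = Pi.single 1 1 := by
  rcases h with h | h
  · simpa [copyCarrier, Wr.mul_wgen] using h
  · have := P.mul_wgen_mem_sub h
    rw [mul_assoc, Wr.wgen_mul_self, mul_one] at this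
    exact (hv (.inr this)).elim

theorem mem_sub_of_mul_mk_zero_mem {v : Wr G} (hv : v ∉ copyCarrier G ∪ P.subCarrier) {s : G}
    (h : v * ⟨0, s⟩ ∈ copyCarrier G ∪ P.subCarrier) :
    v.g * s ∈ P.carrier ∧ Function.support v.a ⊆ P.blockOf (v.g * s) := by
  rw [Wr.mul_mk_zero] at h
  exact h.resolve_left fun h' => hv (.inl h')

theorem eq_of_mul_mk_zero_mem {v : Wr G} (hv : v ∉ copyCarrier G ∪ P.subCarrier) (hv1 : v ≠ 1)
    {s₁ s₂ : G} (hs₁ : s₁ ∈ S) (hs₂ : s₂ ∈ S)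
    (h₁ : v.g * s₁ ∈ P.carrier ∧ Function.support v.a ⊆ P.blockOf (v.g * s₁))
    (h₂ : v.g * s₂ ∈ P.carrier ∧ Function.support v.a ⊆ P.blockOf (v.g * s₂)) :
    s₁ = s₂ := by
  by_cases hg : v.g ∈ P.carrier
  · have hexit : ∀ s, Function.support v.a ⊆ P.blockOf (v.g * s) →
        v.g * s ∉ P.carrier ∨ P.block (v.g * s) ≠ P.block v.g := fun s hsupp => by
      by_contra hstay
      simp only [not_or, not_not] at hstay
      exact hv (.inr ⟨hg, P.blockOf_eq hstay.2 ▸ hsupp⟩)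
    exact P.exits_subsingleton _ hg ⟨hs₁, hexit _ h₁.2⟩ ⟨hs₂, hexit _ h₂.2⟩
  by_cases hg1 : v.g = 1
  · -- the blocks of `s₁` and `s₂` are distinct, so no lamp can be lit
    by_contra hne
    have ha : v.a = 0 := funext fun t => Function.notMem_support.mp fun ht => hne <| by
      have hb₁ := (h₁.2 ht).2
      have hb₂ := (h₂.2 ht).2
      rw [hg1, one_mul, P.block_eq_self _ hs₁] at hb₁
      rw [hg1, one_mul, P.block_eq_self _ hs₂] at hb₂
      rw [← hb₁, hb₂]
    exact hv1 (Wr.ext ha hg1)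
  · exact P.entries_subsingleton _ hg hg1 ⟨hs₁, h₁.1⟩ ⟨hs₂, h₂.1⟩

theorem lift_entries_subsingleton : ∀ v ∉ copyCarrier G ∪ P.subCarrier, v ≠ 1 →
    {z ∈ wS S | v * z ∈ copyCarrier G ∪ P.subCarrier}.Subsingleton := by
  intro v hv hv1
  have hmixed : ∀ s, v * wgen G ∈ copyCarrier G ∪ P.subCarrier →
      v * ⟨0, s⟩ ∈ copyCarrier G ∪ P.subCarrier → False := by
    intro s hw hs
    -- `v.a = δ_1 + δ_{v.g}` would have to vanish at `1`, which forces `v = 1`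
    have ha := P.single_add_eq_of_mul_wgen_mem hv hw
    have ha1 : v.a 1 = 0 := Function.notMem_support.mp fun h =>
      P.one_notMem ((P.mem_sub_of_mul_mk_zero_mem hv hs).2 h).1
    have hg1 : v.g = 1 := by
      by_contra hg1
      simpa [ha1, Pi.single_apply, Ne.symm hg1] using congrFun ha 1
    rw [hg1, add_eq_right] at ha
    exact hv1 (Wr.ext ha hg1)
  rintro z₁ ⟨hz₁, h₁⟩ z₂ ⟨hz₂, h₂⟩
  rcases mem_wS.mp hz₁ with rfl | ⟨s₁, hs₁, rfl⟩ <;>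
    rcases mem_wS.mp hz₂ with rfl | ⟨s₂, hs₂, rfl⟩
  · rfl
  · exact (hmixed _ h₁ h₂).elim
  · exact (hmixed _ h₂ h₁).elim
  · rw [P.eq_of_mul_mk_zero_mem hv hv1 hs₁ hs₂ (P.mem_sub_of_mul_mk_zero_mem hv h₁)
      (P.mem_sub_of_mul_mk_zero_mem hv h₂)]

end Carrier

variable {G : Type*} [Group G] [Fintype G] [DecidableEq G] {S : Set G} (P : FlipSet G S)

def liftBlock (v : Wr G) : Wr G := if v.a = Pi.single 1 1 then wgen G else ⟨0, P.block v.g⟩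

def liftColor (v : Wr G) : ZMod 2 := ∑ t, v.a t + P.color v.g

theorem liftBlock_of_mem_sub {v : Wr G} (hv : v ∈ P.subCarrier) :
    P.liftBlock v = ⟨0, P.block v.g⟩ := if_neg (P.a_ne_single_one hv)

theorem liftColor_mul (v : Wr G) : ∀ z ∈ wS S, P.liftColor (v * z) = P.liftColor v + 1 := by
  intro z hz
  rcases mem_wS.mp hz with rfl | ⟨s, hs, rfl⟩
  · simp only [liftColor, Wr.mul_wgen, Pi.add_apply, Finset.sum_add_distrib]
    simp [add_right_comm]
  · simp only [liftColor, Wr.mul_mk_zero, P.color_mul v.g s hs, add_assoc]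

theorem lift_exits_subsingleton : ∀ v ∈ copyCarrier G ∪ P.subCarrier,
    {z ∈ wS S | v * z ∉ copyCarrier G ∪ P.subCarrier ∨
      P.liftBlock (v * z) ≠ P.liftBlock v}.Subsingleton := by
  rintro v (hv | hv)
  · refine Set.subsingleton_of_forall_eq (wgen G) fun z ⟨hz, hexit⟩ => ?_
    rcases mem_wS.mp hz with rfl | ⟨s, -, rfl⟩
    · rfl
    · have hmem : (v * ⟨0, s⟩).a = Pi.single 1 1 := by rwa [Wr.mul_mk_zero]
      refine hexit.elim (fun h => (h (.inl hmem)).elim) fun h => (h ?_).elim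
      rw [liftBlock, liftBlock, if_pos hmem, if_pos (show v.a = Pi.single 1 1 from hv)]
  · refine ((P.exits_subsingleton v.g hv.1).image fun s => (⟨0, s⟩ : Wr G)).anti
      fun z ⟨hz, hexit⟩ => ?_
    rcases mem_wS.mp hz with rfl | ⟨s, hs, rfl⟩
    · have hw := P.mul_wgen_mem_sub hv
      refine hexit.elim (fun h => (h (.inr hw)).elim) fun h => (h ?_).elim
      rw [P.liftBlock_of_mem_sub hw, P.liftBlock_of_mem_sub hv, Wr.mul_wgen]
    · refine ⟨s, ⟨hs, ?_⟩, rfl⟩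
      by_contra hstay
      simp only [not_or, not_not] at hstay
      have hmem : v * ⟨0, s⟩ ∈ P.subCarrier := by
        rw [Wr.mul_mk_zero]
        exact ⟨hstay.1, P.blockOf_eq hstay.2 ▸ hv.2⟩
      refine hexit.elim (fun h => h (.inr hmem)) fun h => h ?_
      rw [P.liftBlock_of_mem_sub hmem, P.liftBlock_of_mem_sub hv, Wr.mul_mk_zero, hstay.2]

def lift : FlipSet (Wr G) (wS S) where
  color := P.liftColor
  color_one := by simp [liftColor, Wr.one_def, P.color_one]
  color_mul := P.liftColor_mul
  carrier := copyCarrier G ∪ P.subCarrier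
  block := P.liftBlock
  subset_carrier z hz := by
    rcases mem_wS.mp hz with rfl | ⟨s, hs, rfl⟩
    · exact .inl Wr.wgen_a
    · exact .inr ⟨P.subset_carrier hs, by simp⟩
  block_eq_self z hz := by
    rcases mem_wS.mp hz with rfl | ⟨s, hs, rfl⟩
    · exact if_pos Wr.wgen_a
    · rw [P.liftBlock_of_mem_sub ⟨P.subset_carrier hs, by simp⟩, P.block_eq_self s hs]
  one_notMem h := h.elim (fun h => by simpa [Wr.one_def] using congrFun h 1)
    fun h => P.one_notMem h.1
  exits_subsingleton := P.lift_exits_subsingleton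
  entries_subsingleton := P.lift_entries_subsingleton

theorem lift_balanced (hS : S.Nonempty) : P.lift.Balanced := by
  obtain ⟨s, hs⟩ := hS
  have hcopy := ncard_inter_color_eq (c := P.liftColor) (copyCarrier G) (s := ⟨0, s⟩)
    (fun v hv => by rwa [Wr.mul_mk_zero])
    fun v _ => P.liftColor_mul v _ (mem_wS.mpr (.inr ⟨s, hs, rfl⟩))
  have hsub := ncard_inter_color_eq (c := P.liftColor) P.subCarrier (s := wgen G)
    (fun v hv => P.mul_wgen_mem_sub hv) fun v _ => P.liftColor_mul v _ (mem_wS.mpr (.inl rfl))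
  have hdisj : Disjoint (copyCarrier G) P.subCarrier :=
    Set.disjoint_left.mpr fun v hv hv' => P.a_ne_single_one hv' hv
  change ((copyCarrier G ∪ P.subCarrier) ∩ P.liftColor ⁻¹' {0}).ncard =
    ((copyCarrier G ∪ P.subCarrier) ∩ P.liftColor ⁻¹' {1}).ncard
  rw [Set.union_inter_distrib_right, Set.union_inter_distrib_right,
    Set.ncard_union_eq (hdisj.mono Set.inter_subset_left Set.inter_subset_left),
    Set.ncard_union_eq (hdisj.mono Set.inter_subset_left Set.inter_subset_left), hcopy, hsub]

end FlipSet

def FlipSet.empty (G : Type*) [Group G] : FlipSet G ∅ where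
  color _ := 0
  color_one := rfl
  color_mul := by simp
  carrier := ∅
  block := id
  subset_carrier := subset_rfl
  block_eq_self := by simp
  one_notMem := id
  exits_subsingleton := by simp
  entries_subsingleton := by simp

theorem exists_flipSet (n : ℕ) :
    ∃ (G : Type) (_ : Group G) (_ : Fintype G) (_ : DecidableEq G) (S : Set G) (_ : FlipSet G S),
      (∃ k, Fintype.card G = 2 ^ k) ∧ IsSymmGenSet S ∧ S.ncard = n := by
  induction n with
  | zero =>
    exact ⟨Unit, _, _, inferInstance, ∅, FlipSet.empty Unit, ⟨0, rfl⟩,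
      ⟨by simp, by simp, eq_top_iff.mpr fun _ _ => one_mem _⟩, Set.ncard_empty _⟩
  | succ n ih =>
    obtain ⟨G, _, _, _, S, P, ⟨k, hk⟩, hS, hn⟩ := ih
    exact ⟨Wr G, _, _, inferInstance, wS S, P.lift, ⟨_, Wr.card_eq_two_pow hk⟩, hS.wS,
      by rw [ncard_wS, hn]⟩

/-- For every `d ≥ 2` there is a finite group `G` of 2-power order with an
inverse-closed identity-free generating set `S` of size `d` such that `Cay(G, S)` is
bipartite and admits an induced subgraph of maximum degree at most 1 on strictly more
than half its vertices. -/
theorem iterated_wreath_counterexamples (d : ℕ) (hd : 2 ≤ d) :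
    ∃ (G : Type) (instG : Group G) (_ : Finite G) (S : Set G),
      (∃ k : ℕ, Nat.card G = 2 ^ k) ∧ @GoodBipartiteCayley G instG S d := by
  obtain ⟨G, _, _, _, S, P, ⟨k, hk⟩, hS, hn⟩ := exists_flipSet (d - 1)
  have hne : S.Nonempty := Set.nonempty_of_ncard_ne_zero (by omega)
  refine ⟨Wr G, inferInstance, inferInstance, wS S,
    ⟨_, Nat.card_eq_fintype_card.trans (Wr.card_eq_two_pow hk)⟩, ?_⟩
  have := P.lift.goodBipartiteCayley hS.wS ⟨wgen G, Set.mem_insert _ _⟩ (P.lift_balanced hne)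
  rwa [ncard_wS, hn, Nat.sub_add_cancel (by omega)] at this
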